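/- Let Γ be a Blackwell game with finitely many players, finite action sets, and bounded, Borel-measurable, tail-measurable payoff functions, let ε > 0, and for each player i let W_i = {p ∈ A^ℕ : f_i(p) ≥ v̄_i − ε/2}. Then for every player i, the minmax value of player i in the Blackwell game with the same players and action sets and with payoff function 1_{W_i} for player i equals 1. -/

import Mathlib

open MeasureTheory

namespace Blackwell

/-- The set of plays: infinite streams of action profiles. -/
abbrev Play {ι : Type*} (Ac : ι → Type*) : Type _ := ℕ → ∀ j, Ac j

/-- A behavior strategy of player `i`: a mixed action after every finite history.
A history of length `t` is encoded by the first `t` coordinates of a play, and the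
strategy is required to depend only on these coordinates. -/
structure Strategy {ι : Type*} (Ac : ι → Type*) (i : ι) where
  act : ℕ → Play Ac → PMF (Ac i)
  depends_on_past : ∀ (t : ℕ) (p q : Play Ac), (∀ s, s < t → p s = q s) → act t p = act t q

/-- A strategy profile: a behavior strategy for every player. -/
abbrev Profile {ι : Type*} (Ac : ι → Type*) : Type _ := ∀ i, Strategy Ac i

/-- The assignment, to each strategy profile `σ`, of the induced (Ionescu–Tulcea)
probability measure `P_σ` on the set of plays; it is uniquely characterized by the
probabilities it assigns to cylinder sets. -/
structure PlayMeasure {ι : Type*} [Fintype ι] (Ac : ι → Type*)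
    [∀ i, MeasurableSpace (Ac i)] where
  μ : Profile Ac → Measure (Play Ac)
  isProb : ∀ σ, IsProbabilityMeasure (μ σ)
  cyl : ∀ (σ : Profile Ac) (n : ℕ) (p : Play Ac),
    μ σ {q | ∀ t, t < n → q t = p t}
      = ∏ t ∈ Finset.range n, ∏ i, ((σ i).act t p) (p t i)

variable {ι : Type*} [Fintype ι] [DecidableEq ι] [Nonempty ι]
  {Ac : ι → Type*} [∀ i, Fintype (Ac i)] [∀ i, Nonempty (Ac i)]
  [∀ i, MeasurableSpace (Ac i)] [∀ i, DiscreteMeasurableSpace (Ac i)]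

/-- The expected payoff `E_σ[f]` of a strategy profile `σ` for payoff function `f`. -/
noncomputable def expPay (PM : PlayMeasure Ac) (σ : Profile Ac) (f : Play Ac → ℝ) : ℝ :=
  ∫ p, f p ∂(PM.μ σ)

/-- Concatenation of the history given by the first `n` coordinates of `h` with the play `q`. -/
def splice (n : ℕ) (h q : Play Ac) : Play Ac := fun t => if t < n then h t else q (t - n)

/-- The continuation of a strategy in the subgame that starts at the history
given by the first `n` coordinates of `h`. -/
def Strategy.shift {i : ι} (σi : Strategy Ac i) (n : ℕ) (h : Play Ac) : Strategy Ac i where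
  act t q := σi.act (n + t) (splice n h q)
  depends_on_past := by
    intro t p q hpq
    refine σi.depends_on_past _ _ _ ?_
    intro s hs
    simp only [splice]
    by_cases hsn : s < n
    · simp [hsn]
    · simp only [if_neg hsn]
      exact hpq (s - n) (by omega)

/-- The expected payoff `E_σ[f ∣ h]` in the subgame that starts at the history
given by the first `n` coordinates of `h`. -/
noncomputable def subExp (PM : PlayMeasure Ac) (σ : Profile Ac) (f : Play Ac → ℝ)
    (n : ℕ) (h : Play Ac) : ℝ :=
  ∫ q, f (splice n h q) ∂(PM.μ (fun i => (σ i).shift n h))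

/-- The minmax value of player `i`. -/
noncomputable def minmax (PM : PlayMeasure Ac) (f : Play Ac → ℝ) (i : ι) : ℝ :=
  ⨅ τ : Profile Ac, ⨆ σi : Strategy Ac i, expPay PM (Function.update τ i σi) f

/-- The maxmin value of player `i`. -/
noncomputable def maxmin (PM : PlayMeasure Ac) (f : Play Ac → ℝ) (i : ι) : ℝ :=
  ⨆ σi : Strategy Ac i, ⨅ τ : Profile Ac, expPay PM (Function.update τ i σi) f

/-- The minmax value of player `i` in the subgame that starts at the history
given by the first `n` coordinates of `h`. -/
noncomputable def subMinmax (PM : PlayMeasure Ac) (f : Play Ac → ℝ) (i : ι)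
    (n : ℕ) (h : Play Ac) : ℝ :=
  ⨅ τ : Profile Ac, ⨆ σi : Strategy Ac i, subExp PM (Function.update τ i σi) f n h

/-- The maxmin value of player `i` in the subgame that starts at the history
given by the first `n` coordinates of `h`. -/
noncomputable def subMaxmin (PM : PlayMeasure Ac) (f : Play Ac → ℝ) (i : ι)
    (n : ℕ) (h : Play Ac) : ℝ :=
  ⨆ σi : Strategy Ac i, ⨅ τ : Profile Ac, subExp PM (Function.update τ i σi) f n h

/-- A strategy profile `σ` is an `ε`-equilibrium if no player can gain more than `ε`
by a unilateral deviation. -/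
def IsEpsEquilibrium (PM : PlayMeasure Ac) (f : ι → Play Ac → ℝ) (ε : ℝ)
    (σ : Profile Ac) : Prop :=
  ∀ (i : ι) (σi : Strategy Ac i),
    expPay PM (Function.update σ i σi) (f i) ≤ expPay PM σ (f i) + ε

/-- A payoff function is tail-measurable if changing finitely many coordinates of the
play does not change its value. -/
def TailMeasurable (f : Play Ac → ℝ) : Prop :=
  ∀ p q : Play Ac, (∃ N, ∀ t, N ≤ t → p t = q t) → f p = f q

/-- A payoff function is bounded. -/
def BddPayoff (f : Play Ac → ℝ) : Prop := ∃ C, ∀ p, |f p| ≤ C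

/-! For a tail-measurable payoff `f`, player `i`'s best-reply value against any `τ` in any
subgame is at least the minmax value `v`: the opponents could play their subgame strategies from
the start, ignoring the actual history, which changes only finitely many coordinates of the play.
Fix the opponents' profile `τ` and a `γε`-best reply `σ` to it, and let `V n` and `g n` be, in
the subgame after `n` stages, the best-reply value against `τ` and the value of `σ`. Pasting
near-best replies in all subgames after stage `n` gives `E_σ[V n - g n] ≤ γε`, while `v ≤ V n`
and, by Lévy's upward theorem, `g n → f` almost surely. Hence on `{f < v - ε}` eventually
`V n - g n ≥ ε`, and by Markov's inequality this event has probability at most `γ`. -/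

set_option linter.unusedSectionVars false

open Filter Function Topology

instance (PM : PlayMeasure Ac) (σ : Profile Ac) : IsProbabilityMeasure (PM.μ σ) := PM.isProb σ

instance {i : ι} : Nonempty (Strategy Ac i) :=
  ⟨⟨fun _ _ => PMF.pure (Classical.arbitrary _), fun _ _ _ _ => rfl⟩⟩

@[ext]
theorem Strategy.ext {i : ι} {σ τ : Strategy Ac i} (h : σ.act = τ.act) : σ = τ := by
  cases σ; cases τ; cases h; rfl

section Plays

def drop (n : ℕ) (p : Play Ac) : Play Ac := fun t => p (n + t)

@[simp]
theorem drop_apply (n t : ℕ) (p : Play Ac) : drop n p t = p (n + t) := rfl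

abbrev History (Ac : ι → Type*) (n : ℕ) : Type _ := Fin n → ∀ j, Ac j

def trunc (n : ℕ) (p : Play Ac) : History Ac n := fun t => p t

noncomputable def extend {n : ℕ} (w : History Ac n) : Play Ac :=
  fun t => if ht : t < n then w ⟨t, ht⟩ else Classical.arbitrary _

def cylSet (n : ℕ) (p : Play Ac) : Set (Play Ac) := {q | ∀ t < n, q t = p t}

def DeterminedBy {β : Type*} (n : ℕ) (g : Play Ac → β) : Prop :=
  ∀ p q : Play Ac, (∀ t < n, p t = q t) → g p = g q

variable {n : ℕ}

theorem splice_of_lt (h q : Play Ac) {t : ℕ} (ht : t < n) : splice n h q t = h t := if_pos ht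

@[simp]
theorem splice_add (h q : Play Ac) (t : ℕ) : splice n h q (n + t) = q t := by
  simp [splice]

@[simp]
theorem drop_splice (h q : Play Ac) : drop n (splice n h q) = q :=
  funext (splice_add h q)

theorem splice_drop {h p : Play Ac} (H : ∀ t < n, h t = p t) : splice n h (drop n p) = p := by
  ext1 t
  simp only [splice, drop_apply]
  split_ifs with ht
  · exact H t ht
  · congr 1
    omega

theorem splice_congr {h h' : Play Ac} (H : ∀ t < n, h t = h' t) : splice n h = splice n h' := by
  ext q t
  simp only [splice]
  split_ifs with ht
  · exact congrFun (H t ht) _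
  · rfl

theorem trunc_eq_iff {p q : Play Ac} : trunc n p = trunc n q ↔ ∀ t < n, p t = q t :=
  ⟨fun h t ht => congrFun h ⟨t, ht⟩, fun h => funext fun t => h t t.2⟩

@[simp]
theorem trunc_splice (h q : Play Ac) : trunc n (splice n h q) = trunc n h :=
  trunc_eq_iff.2 fun _ => splice_of_lt h q

@[simp]
theorem trunc_extend (w : History Ac n) : trunc n (extend w) = w :=
  funext fun t => dif_pos t.2

theorem extend_trunc (p : Play Ac) : ∀ t < n, extend (trunc n p) t = p t :=
  trunc_eq_iff.1 (trunc_extend _)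

theorem cylSet_eq_preimage (p : Play Ac) : cylSet n p = trunc n ⁻¹' {trunc n p} := by
  ext q
  exact trunc_eq_iff.symm

theorem cylSet_extend (w : History Ac n) : cylSet n (extend w) = trunc n ⁻¹' {w} := by
  rw [cylSet_eq_preimage, trunc_extend]

theorem cylSet_eq_of_mem {p q : Play Ac} (hq : q ∈ cylSet n p) : cylSet n p = cylSet n q := by
  rw [cylSet_eq_preimage, cylSet_eq_preimage, (trunc_eq_iff.2 hq : trunc n q = trunc n p)]

theorem cylSet_anti {m : ℕ} (hnm : n ≤ m) (p : Play Ac) : cylSet m p ⊆ cylSet n p :=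
  fun _ hq t ht => hq t (ht.trans_le hnm)

theorem splice_preimage_cylSet {m : ℕ} (hnm : n ≤ m) {h p : Play Ac}
    (H : ∀ t < n, h t = p t) : splice n h ⁻¹' cylSet m p = cylSet (m - n) (drop n p) := by
  ext q
  refine ⟨fun hq s hs => ?_, fun hq t ht => ?_⟩
  · rw [← splice_add h q s]
    exact hq (n + s) (by omega)
  · simp only [splice]
    split_ifs with htn
    · exact H t htn
    · rw [hq (t - n) (by omega), drop_apply]
      congr 1
      omega

theorem agree_of_splice_mem_cylSet {m : ℕ} (hnm : n ≤ m) {h p q : Play Ac}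
    (hq : splice n h q ∈ cylSet m p) : ∀ t < n, h t = p t :=
  fun t ht => (splice_of_lt h q ht).symm.trans (hq t (by omega))

theorem DeterminedBy.comp_trunc {β : Type*} {g : Play Ac → β} (hg : DeterminedBy n g) :
    (fun w : History Ac n => g (extend w)) ∘ trunc n = g :=
  funext fun p => hg _ _ (extend_trunc p)

theorem DeterminedBy.splice_eq {β : Type*} {g : Play Ac → β} (hg : DeterminedBy n g)
    (h q : Play Ac) : g (splice n h q) = g h :=
  hg _ _ fun _ => splice_of_lt h q

theorem DeterminedBy.sub {g g' : Play Ac → ℝ} (hg : DeterminedBy n g)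
    (hg' : DeterminedBy n g') : DeterminedBy n fun p => g p - g' p :=
  fun p q hpq => by simp only [hg p q hpq, hg' p q hpq]

theorem DeterminedBy.indicator_preimage_trunc {g : Play Ac → ℝ} (hg : DeterminedBy n g)
    (S : Set (History Ac n)) : DeterminedBy n ((trunc n ⁻¹' S).indicator g) :=
  fun p q hpq => by
    classical
    simp only [Set.indicator_apply, Set.mem_preimage, trunc_eq_iff.2 hpq, hg p q hpq]

theorem determinedBy_apply {t : ℕ} (ht : t < n) : DeterminedBy n fun p : Play Ac => p t :=
  fun _ _ hpq => hpq t ht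

end Plays

section Measurability

variable {n : ℕ}

theorem measurable_trunc (n : ℕ) : Measurable (trunc (Ac := Ac) n) :=
  measurable_pi_lambda _ fun _ => measurable_pi_apply _

theorem measurable_splice (n : ℕ) (h : Play Ac) : Measurable (splice n h) := by
  refine measurable_pi_lambda _ fun t => ?_
  simp only [splice]
  split_ifs
  exacts [measurable_const, measurable_pi_apply _]

theorem measurableSet_cylSet (n : ℕ) (p : Play Ac) : MeasurableSet (cylSet n p) := by
  rw [cylSet_eq_preimage]
  exact measurable_trunc n (measurableSet_singleton _)

def playFiltration : Filtration ℕ (inferInstance : MeasurableSpace (Play Ac)) where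
  seq n := MeasurableSpace.comap (trunc n) inferInstance
  mono' n m hnm := by
    have : trunc (Ac := Ac) n = (fun w (t : Fin n) => w (Fin.castLE hnm t)) ∘ trunc m := rfl
    change MeasurableSpace.comap _ _ ≤ MeasurableSpace.comap _ _
    rw [this, ← MeasurableSpace.comap_comp]
    exact MeasurableSpace.comap_mono Measurable.of_discrete.comap_le
  le' n := (measurable_trunc n).comap_le

theorem DeterminedBy.measurable_playFiltration {β : Type*} [MeasurableSpace β]
    {g : Play Ac → β} (hg : DeterminedBy n g) : Measurable[playFiltration n] g := by
  rw [← hg.comp_trunc]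
  exact Measurable.of_discrete.comp (comap_measurable _)

theorem DeterminedBy.measurable {β : Type*} [MeasurableSpace β] {g : Play Ac → β}
    (hg : DeterminedBy n g) : Measurable g :=
  hg.measurable_playFiltration.mono (playFiltration.le n) le_rfl

theorem DeterminedBy.integrable {g : Play Ac → ℝ} (hg : DeterminedBy n g)
    (μ : Measure (Play Ac)) [IsFiniteMeasure μ] : Integrable g μ := by
  rw [← hg.comp_trunc]
  exact Integrable.of_finite.comp_measurable (measurable_trunc n)

theorem pi_le_of_measurable_apply {m : MeasurableSpace (Play Ac)}
    (h : ∀ t, Measurable[m] fun p : Play Ac => p t) :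
    (MeasurableSpace.pi : MeasurableSpace (Play Ac)) ≤ m :=
  iSup_le fun t => (h t).comap_le

theorem iSup_playFiltration :
    ⨆ n, (playFiltration n : MeasurableSpace (Play Ac)) = MeasurableSpace.pi :=
  le_antisymm (iSup_le playFiltration.le) <| pi_le_of_measurable_apply fun t =>
    (determinedBy_apply (lt_add_one t)).measurable_playFiltration.mono (le_iSup _ (t + 1)) le_rfl

def cylSets (n : ℕ) : Set (Set (Play Ac)) := {s | ∃ m, n ≤ m ∧ ∃ p, s = cylSet m p}

theorem playFiltration_le_generateFrom_cylSets {N : ℕ} (hnN : n ≤ N) :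
    playFiltration N ≤ MeasurableSpace.generateFrom (cylSets (Ac := Ac) n) := by
  rintro _ ⟨S, -, rfl⟩
  rw [← Set.biUnion_preimage_singleton]
  exact MeasurableSet.biUnion S.to_countable fun w _ =>
    MeasurableSpace.measurableSet_generateFrom ⟨N, hnN, extend w, (cylSet_extend w).symm⟩

theorem generateFrom_cylSets (n : ℕ) :
    (MeasurableSpace.pi : MeasurableSpace (Play Ac)) = MeasurableSpace.generateFrom (cylSets n) :=
  le_antisymm
    (pi_le_of_measurable_apply fun t =>
      (determinedBy_apply (lt_max_of_lt_right (lt_add_one t))).measurable_playFiltration.mono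
        (playFiltration_le_generateFrom_cylSets (le_max_left n (t + 1))) le_rfl)
    (MeasurableSpace.generateFrom_le fun _ ⟨m, _, p, hs⟩ => hs ▸ measurableSet_cylSet m p)

theorem isPiSystem_cylSets (n : ℕ) : IsPiSystem (cylSets (Ac := Ac) n) := by
  rintro _ ⟨m₁, hm₁, p₁, rfl⟩ _ ⟨m₂, hm₂, p₂, rfl⟩ ⟨q, hq₁, hq₂⟩
  rw [cylSet_eq_of_mem hq₁, cylSet_eq_of_mem hq₂]
  rcases le_total m₁ m₂ with h | h
  · exact ⟨m₂, hm₂, q, Set.inter_eq_right.2 (cylSet_anti h q)⟩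
  · exact ⟨m₁, hm₁, q, Set.inter_eq_left.2 (cylSet_anti h q)⟩

end Measurability

section Strategies

variable {i : ι} {n : ℕ}

theorem Strategy.shift_congr (σi : Strategy Ac i) {h h' : Play Ac} (H : ∀ t < n, h t = h' t) :
    σi.shift n h = σi.shift n h' := by
  ext t q
  simp only [Strategy.shift, splice_congr H]

/-- Play in every history like `σi` after the history whose first `n` stages are replaced by
those of `w`. -/
def Strategy.reroot (σi : Strategy Ac i) (n : ℕ) (w : Play Ac) : Strategy Ac i where
  act t p := σi.act t (splice n w (drop n p))
  depends_on_past t p q hpq := σi.depends_on_past t _ _ fun s hs => by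
    simp only [splice, drop_apply]
    split_ifs
    · rfl
    · exact hpq _ (by omega)

theorem Strategy.shift_reroot (σi : Strategy Ac i) (h w : Play Ac) :
    (σi.reroot n w).shift n h = σi.shift n w := by
  ext t q
  simp only [Strategy.shift, Strategy.reroot, drop_splice]

def Strategy.paste (σi : Strategy Ac i) (n : ℕ) (σw : History Ac n → Strategy Ac i) :
    Strategy Ac i where
  act t p := if t < n then σi.act t p else (σw (trunc n p)).act t p
  depends_on_past t p q hpq := by
    split_ifs with ht
    · exact σi.depends_on_past t p q hpq
    · rw [trunc_eq_iff.2 fun s hs => hpq s (by omega)]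
      exact (σw _).depends_on_past t p q hpq

theorem Strategy.paste_act_of_lt (σi : Strategy Ac i) (σw : History Ac n → Strategy Ac i)
    {t : ℕ} (ht : t < n) (p : Play Ac) : (σi.paste n σw).act t p = σi.act t p :=
  if_pos ht

theorem Strategy.shift_paste (σi : Strategy Ac i) (σw : History Ac n → Strategy Ac i)
    (w : History Ac n) : (σi.paste n σw).shift n (extend w) = (σw w).shift n (extend w) := by
  ext t q
  simp [Strategy.shift, Strategy.paste]

theorem shift_update_eq {τ τ' : Profile Ac} {σi σi' : Strategy Ac i} {h h' : Play Ac}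
    (hτ : ∀ j ≠ i, (τ j).shift n h = (τ' j).shift n h')
    (hσ : σi.shift n h = σi'.shift n h') (j : ι) :
    (update τ i σi j).shift n h = (update τ' i σi' j).shift n h' := by
  rcases eq_or_ne j i with rfl | hj
  · simpa using hσ
  · simpa [hj] using hτ j hj

end Strategies

section Decomposition

variable (PM : PlayMeasure Ac) (σ : Profile Ac) {n : ℕ}

theorem measure_cylSet (n : ℕ) (p : Play Ac) :
    PM.μ σ (cylSet n p) = ∏ t ∈ Finset.range n, ∏ j, ((σ j).act t p) (p t j) :=
  PM.cyl σ n p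

theorem measure_cylSet_congr {σ'} {p : Play Ac}
    (h : ∀ t < n, ∀ j, (σ j).act t p = (σ' j).act t p) :
    PM.μ σ (cylSet n p) = PM.μ σ' (cylSet n p) := by
  rw [measure_cylSet, measure_cylSet]
  exact Finset.prod_congr rfl fun t ht => Finset.prod_congr rfl fun j _ => by
    rw [h t (Finset.mem_range.1 ht) j]

theorem measure_cylSet_mul_shift {m : ℕ} (hnm : n ≤ m) {h p : Play Ac}
    (H : ∀ t < n, h t = p t) :
    PM.μ σ (cylSet n h) * PM.μ (fun j => (σ j).shift n h) (cylSet (m - n) (drop n p)) =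
      PM.μ σ (cylSet m p) := by
  have hshift : (fun j => (σ j).shift n h) = fun j => (σ j).shift n p :=
    funext fun j => (σ j).shift_congr H
  rw [cylSet_eq_of_mem (fun t ht => (H t ht).symm), hshift, measure_cylSet, measure_cylSet,
    measure_cylSet, ← Finset.prod_range_mul_prod_Ico _ hnm, Finset.prod_Ico_eq_prod_range]
  simp only [Strategy.shift, splice_drop fun _ _ => rfl, drop_apply]

theorem sum_measure_cylSet_extend (n : ℕ) :
    ∑ w : History Ac n, PM.μ σ (cylSet n (extend w)) = 1 := by
  simp_rw [cylSet_extend]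
  rw [sum_measure_preimage_singleton _ fun w _ => measurable_trunc n (measurableSet_singleton w),
    Finset.coe_univ, Set.preimage_univ, measure_univ]

theorem measure_eq_sum_map_splice (n : ℕ) :
    PM.μ σ = ∑ w : History Ac n, PM.μ σ (cylSet n (extend w)) •
      (PM.μ fun j => (σ j).shift n (extend w)).map (splice n (extend w)) := by
  refine ext_of_generate_finite _ (generateFrom_cylSets n) (isPiSystem_cylSets n) ?_ ?_
  · rintro _ ⟨m, hnm, p, rfl⟩
    simp only [Measure.finsetSum_apply, Measure.smul_apply, smul_eq_mul,
      Measure.map_apply (measurable_splice _ _) (measurableSet_cylSet _ _)]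
    rw [Finset.sum_eq_single (trunc n p), splice_preimage_cylSet hnm (extend_trunc p),
      measure_cylSet_mul_shift PM σ hnm (extend_trunc p)]
    · intro w _ hw
      have hempty : splice n (extend w) ⁻¹' cylSet m p = ∅ :=
        Set.eq_empty_of_forall_notMem fun q hq => hw <| by
          rw [← trunc_extend w]
          exact trunc_eq_iff.2 (agree_of_splice_mem_cylSet hnm hq)
      rw [hempty, measure_empty, mul_zero]
    · simp
  · simp only [Measure.finsetSum_apply, Measure.smul_apply, smul_eq_mul, measure_univ, mul_one,
      Measure.map_apply (measurable_splice _ _) MeasurableSet.univ, Set.preimage_univ,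
      sum_measure_cylSet_extend]

noncomputable def histProb (w : History Ac n) : ℝ := (PM.μ σ).real (cylSet n (extend w))

theorem histProb_nonneg (w : History Ac n) : 0 ≤ histProb PM σ w := measureReal_nonneg

theorem sum_histProb (n : ℕ) : ∑ w : History Ac n, histProb PM σ w = 1 := by
  simp_rw [histProb, cylSet_extend]
  rw [sum_measureReal_preimage_singleton _
      fun w _ => measurable_trunc n (measurableSet_singleton w), Finset.coe_univ,
    Set.preimage_univ, probReal_univ]

theorem sum_histProb_mul_le {a : History Ac n → ℝ} {c : ℝ} (h : ∀ w, a w ≤ c) :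
    ∑ w, histProb PM σ w * a w ≤ c :=
  calc ∑ w, histProb PM σ w * a w ≤ ∑ w, histProb PM σ w * c :=
        Finset.sum_le_sum fun w _ => mul_le_mul_of_nonneg_left (h w) (histProb_nonneg PM σ w)
    _ = c := by rw [← Finset.sum_mul, sum_histProb, one_mul]

theorem integral_eq_sum_histProb_mul {φ : Play Ac → ℝ} (hφ : Measurable φ)
    (hint : Integrable φ (PM.μ σ)) (n : ℕ) :
    ∫ p, φ p ∂PM.μ σ = ∑ w : History Ac n, histProb PM σ w *
      ∫ q, φ (splice n (extend w) q) ∂PM.μ (fun j => (σ j).shift n (extend w)) := by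
  rw [measure_eq_sum_map_splice PM σ n] at hint
  conv_lhs => rw [measure_eq_sum_map_splice PM σ n]
  rw [integral_finsetSum_measure fun w _ =>
    integrable_finsetSum_measure.1 hint w (Finset.mem_univ _)]
  refine Finset.sum_congr rfl fun w _ => ?_
  rw [integral_smul_measure, integral_map (measurable_splice _ _).aemeasurable
    hφ.aestronglyMeasurable, smul_eq_mul]
  rfl

theorem DeterminedBy.integral_eq_sum {g : Play Ac → ℝ} (hg : DeterminedBy n g) :
    ∫ p, g p ∂PM.μ σ = ∑ w : History Ac n, histProb PM σ w * g (extend w) := by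
  rw [integral_eq_sum_histProb_mul PM σ hg.measurable (hg.integrable _) n]
  simp only [hg.splice_eq, integral_const, probReal_univ, smul_eq_mul, one_mul]

theorem abs_integral_le_of_abs_le {α : Type*} [MeasurableSpace α] {μ : Measure α}
    [IsProbabilityMeasure μ] {g : α → ℝ} {C : ℝ} (hC : ∀ x, |g x| ≤ C) :
    |∫ x, g x ∂μ| ≤ C := by
  simpa using norm_integral_le_of_norm_le_const (μ := μ)
    (ae_of_all _ fun x => (Real.norm_eq_abs _).trans_le (hC x))

theorem integrable_of_abs_le {f : Play Ac → ℝ} (hf : Measurable f) {C : ℝ}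
    (hC : ∀ p, |f p| ≤ C) : Integrable f (PM.μ σ) :=
  .of_bound hf.aestronglyMeasurable C
    (ae_of_all _ fun p => (Real.norm_eq_abs _).trans_le (hC p))

theorem expPay_eq_sum {f : Play Ac → ℝ} (hf : Measurable f) {C : ℝ} (hC : ∀ p, |f p| ≤ C)
    (n : ℕ) :
    expPay PM σ f = ∑ w : History Ac n, histProb PM σ w * subExp PM σ f n (extend w) :=
  integral_eq_sum_histProb_mul PM σ hf (integrable_of_abs_le PM σ hf hC) n

end Decomposition

section Levy

variable (PM : PlayMeasure Ac) (σ : Profile Ac) {f : Play Ac → ℝ}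

theorem determinedBy_subExp (f : Play Ac → ℝ) (n : ℕ) : DeterminedBy n (subExp PM σ f n) :=
  fun p q hpq => by simp only [subExp, splice_congr hpq, Strategy.shift_congr _ hpq]

theorem subExp_ae_eq_condExp (hf : Measurable f) (hint : Integrable f (PM.μ σ)) (n : ℕ) :
    subExp PM σ f n =ᵐ[PM.μ σ] (PM.μ σ)[f | playFiltration n] := by
  have hdet := determinedBy_subExp PM σ f n
  refine ae_eq_condExp_of_forall_setIntegral_eq (playFiltration.le n) hint
    (fun _ _ _ => (hdet.integrable _).integrableOn) (fun s hs _ => ?_)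
    hdet.measurable_playFiltration.stronglyMeasurable.aestronglyMeasurable
  obtain ⟨S, -, rfl⟩ := hs
  have hS := measurable_trunc n (MeasurableSet.of_discrete (s := S))
  rw [← integral_indicator hS, ← integral_indicator hS,
    (hdet.indicator_preimage_trunc S).integral_eq_sum,
    integral_eq_sum_histProb_mul PM σ (hf.indicator hS) (hint.indicator hS)]
  refine Finset.sum_congr rfl fun w _ => ?_
  by_cases hw : w ∈ S <;> simp [hw, subExp]

theorem tendsto_subExp (hf : Measurable f) (hint : Integrable f (PM.μ σ)) :
    ∀ᵐ p ∂PM.μ σ, Tendsto (fun n => subExp PM σ f n p) atTop (𝓝 (f p)) := by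
  have hlevy := hint.tendsto_ae_condExp (ℱ := playFiltration)
    (by rw [iSup_playFiltration]; exact hf.stronglyMeasurable)
  filter_upwards [hlevy, ae_all_iff.2 fun n => subExp_ae_eq_condExp PM σ hf hint n] with p hp hpn
  simpa only [hpn] using hp

end Levy

noncomputable def replyValue (PM : PlayMeasure Ac) (f : Play Ac → ℝ) (i : ι)
    (τ : Profile Ac) : ℝ :=
  ⨆ σi : Strategy Ac i, expPay PM (update τ i σi) f

noncomputable def subReplyValue (PM : PlayMeasure Ac) (f : Play Ac → ℝ) (i : ι)
    (τ : Profile Ac) (n : ℕ) (h : Play Ac) : ℝ :=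
  ⨆ σi : Strategy Ac i, subExp PM (update τ i σi) f n h

section Values

variable (PM : PlayMeasure Ac) {f : Play Ac → ℝ} {C : ℝ} (i : ι) (τ : Profile Ac) {n : ℕ}

theorem abs_expPay_le (hC : ∀ p, |f p| ≤ C) (σ : Profile Ac) : |expPay PM σ f| ≤ C :=
  abs_integral_le_of_abs_le hC

theorem abs_subExp_le (hC : ∀ p, |f p| ≤ C) (σ : Profile Ac) (h : Play Ac) :
    |subExp PM σ f n h| ≤ C :=
  abs_integral_le_of_abs_le fun _ => hC _

theorem expPay_le_replyValue (hC : ∀ p, |f p| ≤ C) (σi : Strategy Ac i) :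
    expPay PM (update τ i σi) f ≤ replyValue PM f i τ := by
  refine le_ciSup (f := fun σi' => expPay PM (update τ i σi') f) ⟨C, ?_⟩ σi
  rintro _ ⟨σi', rfl⟩
  exact (abs_le.1 (abs_expPay_le PM hC _)).2

theorem subExp_le_subReplyValue (hC : ∀ p, |f p| ≤ C) (h : Play Ac) (σi : Strategy Ac i) :
    subExp PM (update τ i σi) f n h ≤ subReplyValue PM f i τ n h := by
  refine le_ciSup (f := fun σi' => subExp PM (update τ i σi') f n h) ⟨C, ?_⟩ σi
  rintro _ ⟨σi', rfl⟩
  exact (abs_le.1 (abs_subExp_le PM hC _ h)).2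

theorem minmax_le_replyValue (hC : ∀ p, |f p| ≤ C) :
    minmax PM f i ≤ replyValue PM f i τ := by
  refine ciInf_le ⟨-C, ?_⟩ τ
  rintro _ ⟨τ', rfl⟩
  exact (abs_le.1 (abs_expPay_le PM hC _)).1.trans
    (expPay_le_replyValue PM i τ' hC (Classical.arbitrary _))

theorem determinedBy_subReplyValue (f : Play Ac → ℝ) (n : ℕ) :
    DeterminedBy n (subReplyValue PM f i τ n) :=
  fun p q hpq => iSup_congr fun _ => determinedBy_subExp PM _ f n p q hpq

theorem subExp_congr_shift {σ σ' : Profile Ac} {h : Play Ac}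
    (hσ : ∀ j, (σ j).shift n h = (σ' j).shift n h) :
    subExp PM σ f n h = subExp PM σ' f n h := by
  simp only [subExp, hσ]

theorem subExp_eq_of_shift_eq (htail : TailMeasurable f) {σ σ' : Profile Ac} {w h : Play Ac}
    (hσ : ∀ j, (σ j).shift n w = (σ' j).shift n h) :
    subExp PM σ f n w = subExp PM σ' f n h := by
  simp only [subExp, hσ]
  exact integral_congr_ae <| ae_of_all _ fun q =>
    htail _ _ ⟨n, fun t ht => by simp [splice, not_lt.2 ht]⟩

/-- The opponents play `τ` rerooted at `h`; in the subgame at any `w`, a strategy `σi` then gains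
what `σi` rerooted at `w` gains against `τ` in the subgame at `h`. -/
theorem minmax_le_subReplyValue (hf : Measurable f) (hC : ∀ p, |f p| ≤ C)
    (htail : TailMeasurable f) (h : Play Ac) : minmax PM f i ≤ subReplyValue PM f i τ n h := by
  refine (minmax_le_replyValue PM i (fun j => (τ j).reroot n h) hC).trans (ciSup_le fun σi => ?_)
  rw [expPay_eq_sum PM _ hf hC n]
  refine sum_histProb_mul_le PM _ fun w => ?_
  have hreroot : subExp PM (update (fun j => (τ j).reroot n h) i σi) f n (extend w) =
      subExp PM (update τ i (σi.reroot n (extend w))) f n h :=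
    subExp_eq_of_shift_eq PM htail <| shift_update_eq
      (fun j _ => (τ j).shift_reroot _ _) (σi.shift_reroot _ _).symm
  exact hreroot ▸ subExp_le_subReplyValue PM i τ hC h _

/-- Paste `η`-best replies in all subgames after `n` stages onto `σi`. -/
theorem sum_histProb_mul_subReplyValue_le (hf : Measurable f) (hC : ∀ p, |f p| ≤ C)
    (σi : Strategy Ac i) (n : ℕ) :
    ∑ w : History Ac n, histProb PM (update τ i σi) w * subReplyValue PM f i τ n (extend w) ≤
      replyValue PM f i τ := by
  refine le_of_forall_pos_le_add fun η hη => ?_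
  choose σw hσw using fun w : History Ac n =>
    exists_lt_of_lt_ciSup (sub_lt_self (subReplyValue PM f i τ n (extend w)) hη)
  have hprob (w : History Ac n) :
      histProb PM (update τ i σi) w = histProb PM (update τ i (σi.paste n σw)) w := by
    simp only [histProb, measureReal_def]
    rw [measure_cylSet_congr PM _ fun t ht j => ?_]
    rcases eq_or_ne j i with rfl | hj
    · simp [Strategy.paste_act_of_lt _ _ ht]
    · simp [hj]
  have hsub (w : History Ac n) :
      subExp PM (update τ i (σw w)) f n (extend w) =
        subExp PM (update τ i (σi.paste n σw)) f n (extend w) :=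
    subExp_congr_shift PM (shift_update_eq (fun _ _ => rfl) (σi.shift_paste σw w).symm)
  calc ∑ w, histProb PM (update τ i σi) w * subReplyValue PM f i τ n (extend w)
      ≤ ∑ w, histProb PM (update τ i (σi.paste n σw)) w *
          (subExp PM (update τ i (σi.paste n σw)) f n (extend w) + η) :=
        Finset.sum_le_sum fun w _ => by
          rw [hprob, ← hsub]
          exact mul_le_mul_of_nonneg_left (by linarith [hσw w]) (histProb_nonneg _ _ w)
    _ = expPay PM (update τ i (σi.paste n σw)) f + η := by
        simp only [mul_add, Finset.sum_add_distrib, ← Finset.sum_mul, sum_histProb, one_mul,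
          expPay_eq_sum PM _ hf hC n]
    _ ≤ replyValue PM f i τ + η := by
        grw [expPay_le_replyValue PM i τ hC]

theorem integral_subReplyValue_sub_subExp_le (hf : Measurable f) (hC : ∀ p, |f p| ≤ C)
    (σi : Strategy Ac i) (n : ℕ) :
    ∫ p, (subReplyValue PM f i τ n p - subExp PM (update τ i σi) f n p)
        ∂PM.μ (update τ i σi) ≤ replyValue PM f i τ - expPay PM (update τ i σi) f := by
  rw [((determinedBy_subReplyValue PM i τ f n).sub (determinedBy_subExp PM _ f n)).integral_eq_sum,
    expPay_eq_sum PM _ hf hC n]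
  simp only [mul_sub, Finset.sum_sub_distrib]
  linarith [sum_histProb_mul_subReplyValue_le PM i τ hf hC σi n]

end Values

theorem measureReal_setOf_eventually_mem_le {α : Type*} [MeasurableSpace α] (μ : Measure α)
    [IsFiniteMeasure μ] {s : ℕ → Set α} {c : ℝ} (h : ∀ n, μ.real (s n) ≤ c) :
    μ.real {x | ∀ᶠ n in atTop, x ∈ s n} ≤ c := by
  have hc : 0 ≤ c := measureReal_nonneg.trans (h 0)
  have hmono : Monotone fun N => ⋂ n ≥ N, s n :=
    fun N M hNM => Set.biInter_mono (fun n hn => hNM.trans hn) fun _ _ => subset_rfl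
  have hset : {x | ∀ᶠ n in atTop, x ∈ s n} = ⋃ N, ⋂ n ≥ N, s n := by
    ext
    simp [eventually_atTop]
  refine ENNReal.toReal_le_of_le_ofReal hc ?_
  rw [hset, hmono.measure_iUnion]
  exact iSup_le fun N => (measure_mono (Set.iInter₂_subset N le_rfl)).trans
    ((ENNReal.le_ofReal_iff_toReal_le (measure_ne_top _ _) hc).2 (h N))

theorem measureReal_le_subReplyValue_sub_subExp_le (PM : PlayMeasure Ac) {f : Play Ac → ℝ}
    {C : ℝ} (hf : Measurable f) (hC : ∀ p, |f p| ≤ C) (i : ι) (τ : Profile Ac)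
    {σi : Strategy Ac i} {ε γ : ℝ} (hε : 0 < ε)
    (hσi : replyValue PM f i τ - γ * ε < expPay PM (update τ i σi) f) (n : ℕ) :
    (PM.μ (update τ i σi)).real
      {p | ε ≤ subReplyValue PM f i τ n p - subExp PM (update τ i σi) f n p} ≤ γ := by
  have hD := (determinedBy_subReplyValue PM i τ f n).sub
    (determinedBy_subExp PM (update τ i σi) f n)
  have hmarkov := mul_meas_ge_le_integral_of_nonneg
    (ae_of_all _ fun p => sub_nonneg.2 (subExp_le_subReplyValue PM i τ hC p σi))
    (hD.integrable (PM.μ (update τ i σi))) ε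
  have hgap := integral_subReplyValue_sub_subExp_le PM i τ hf hC σi n
  by_contra! hlt
  nlinarith

theorem exists_measureReal_lt_minmax_sub_le (PM : PlayMeasure Ac) {f : Play Ac → ℝ} {C : ℝ}
    (hf : Measurable f) (hC : ∀ p, |f p| ≤ C) (htail : TailMeasurable f) {ε : ℝ}
    (hε : 0 < ε) (i : ι) (τ : Profile Ac) {γ : ℝ} (hγ : 0 < γ) :
    ∃ σi : Strategy Ac i,
      (PM.μ (update τ i σi)).real {p | f p < minmax PM f i - ε} ≤ γ := by
  obtain ⟨σi, hσi⟩ :=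
    exists_lt_of_lt_ciSup (sub_lt_self (replyValue PM f i τ) (mul_pos hγ hε))
  refine ⟨σi, ?_⟩
  set μ := PM.μ (update τ i σi)
  set g := fun n => subExp PM (update τ i σi) f n
  set gap := fun n => {p | ε ≤ subReplyValue PM f i τ n p - g n p}
  have hbad : {p | f p < minmax PM f i - ε} ⊆
      {p | ¬ Tendsto (fun n => g n p) atTop (𝓝 (f p))} ∪
        {p | ∀ᶠ n in atTop, p ∈ gap n} := by
    intro p hp
    by_cases hconv : Tendsto (fun n => g n p) atTop (𝓝 (f p))
    · right
      filter_upwards [hconv.eventually (gt_mem_nhds hp)] with n hn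
      have := minmax_le_subReplyValue PM i τ hf hC htail p (n := n)
      simp only [gap, Set.mem_ofPred_eq]
      linarith
    · exact Or.inl hconv
  have hnull : μ.real {p | ¬ Tendsto (fun n => g n p) atTop (𝓝 (f p))} = 0 := by
    rw [measureReal_eq_zero_iff]
    exact ae_iff.1 (tendsto_subExp PM _ hf (integrable_of_abs_le PM _ hf hC))
  calc μ.real {p | f p < minmax PM f i - ε}
      ≤ μ.real {p | ¬ Tendsto (fun n => g n p) atTop (𝓝 (f p))} +
          μ.real {p | ∀ᶠ n in atTop, p ∈ gap n} :=
        (measureReal_mono hbad).trans (measureReal_union_le _ _)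
    _ ≤ γ := by
        rw [hnull, zero_add]
        exact measureReal_setOf_eventually_mem_le μ
          (measureReal_le_subReplyValue_sub_subExp_le PM hf hC i τ hε hσi)

theorem replyValue_indicator_eq_one (PM : PlayMeasure Ac) {W : Set (Play Ac)}
    (hW : MeasurableSet W) (i : ι) (τ : Profile Ac)
    (h : ∀ γ > 0, ∃ σi : Strategy Ac i, (PM.μ (update τ i σi)).real Wᶜ ≤ γ) :
    replyValue PM (W.indicator fun _ => (1 : ℝ)) i τ = 1 := by
  have hexp (σ : Profile Ac) : expPay PM σ (W.indicator fun _ => 1) = (PM.μ σ).real W :=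
    integral_indicator_one hW
  have hle (p : Play Ac) : |W.indicator (fun _ => (1 : ℝ)) p| ≤ 1 := by
    by_cases hp : p ∈ W <;> simp [hp]
  refine le_antisymm (ciSup_le fun σi => (hexp _).trans_le measureReal_le_one)
    (le_of_forall_pos_le_add fun γ hγ => ?_)
  obtain ⟨σi, hσi⟩ := h γ hγ
  have := expPay_le_replyValue PM i τ hle σi
  rw [hexp] at this
  rw [probReal_compl_eq_one_sub hW] at hσi
  linarith

/-- With `W_i = {p : f_i(p) ≥ v̄_i - ε/2}`, the minmax value of player `i`
in the auxiliary Blackwell game with payoff `1_(W_i)` for player `i` equals `1`. -/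
theorem minmax_indicator_eq_one (PM : PlayMeasure Ac) (f : ι → Play Ac → ℝ)
    (hbdd : ∀ j, BddPayoff (f j)) (hmeas : ∀ j, Measurable (f j))
    (htail : ∀ j, TailMeasurable (f j))
    (ε : ℝ) (hε : 0 < ε) (i : ι) :
    minmax PM
      (Set.indicator {p : Play Ac | minmax PM (f i) i - ε / 2 ≤ f i p} fun _ => (1 : ℝ))
      i = 1 := by
  obtain ⟨C, hC⟩ := hbdd i
  have hW : MeasurableSet {p : Play Ac | minmax PM (f i) i - ε / 2 ≤ f i p} :=
    measurableSet_le measurable_const (hmeas i)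
  have hvalue (τ : Profile Ac) :
      replyValue PM (Set.indicator {p : Play Ac | minmax PM (f i) i - ε / 2 ≤ f i p}
        fun _ => (1 : ℝ)) i τ = 1 :=
    replyValue_indicator_eq_one PM hW i τ fun γ hγ => by
      simpa only [Set.compl_ofPred, not_le] using
        exists_measureReal_lt_minmax_sub_le PM (hmeas i) hC (htail i) (half_pos hε) i τ hγ
  exact (iInf_congr hvalue).trans ciInf_const

end Blackwell
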